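/- Let p_t(0,0) be the return probability at time t of the rate-1 continuous-time simple random walk on ℤ (d=1). There exists a constant C > 0 such that p_t(0,0) ≥ C·t^{-1/2} for all t ≥ 1. -/

import Mathlib

/-- Return probability at time `t` of the rate-1 continuous-time simple random walk on
`ℤ` (jumps `±1` with probability `1/2` each at the events of a rate-1 Poisson process):
`p_t(0,0) = Σ_n e^{-t} t^n/n! · (number of ±1-walks of length n returning to 0)/2^n`. -/
noncomputable def returnProbZ (t : ℝ) : ℝ :=
  ∑' n : ℕ, Real.exp (-t) * t ^ n / n.factorial *
    ((if Even n then (n.choose (n / 2) : ℝ) else 0) / 2 ^ n)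

lemma tsum_pow_div_factorial' (x : ℝ) : ∑' n : ℕ, x ^ n / (n.factorial : ℝ) = Real.exp x := by
  rw [Real.exp_eq_exp_ℝ, NormedSpace.exp_eq_tsum_div]

lemma choose_le_two_pow' (n k : ℕ) : n.choose k ≤ 2 ^ n := by
  rcases le_or_gt k n with h | h
  · calc n.choose k ≤ ∑ i ∈ Finset.range (n+1), n.choose i :=
        Finset.single_le_sum (fun i _ => Nat.zero_le _) (Finset.mem_range.mpr (Nat.lt_succ_of_le h))
    _ = 2 ^ n := Nat.sum_range_choose n
  · rw [Nat.choose_eq_zero_of_lt h]; exact Nat.zero_le _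

lemma centralBinom_sqrt_bound : ∀ m : ℕ, 1 ≤ m →
    (4 : ℝ) ^ m ≤ 2 * Real.sqrt m * m.centralBinom := by
  intro m hm
  induction m, hm using Nat.le_induction with
  | base => simp [Nat.centralBinom]; norm_num [Nat.choose]
  | succ m hm ih =>
    have hC : ((m + 1 : ℕ) : ℝ) * (Nat.centralBinom (m+1) : ℝ)
        = 2 * (2 * m + 1) * Nat.centralBinom m := by
      exact_mod_cast congrArg (Nat.cast (R := ℝ)) (Nat.succ_mul_centralBinom_succ m)
    have hsm : Real.sqrt m ^ 2 = (m : ℝ) := Real.sq_sqrt (by positivity)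
    have hsm1 : Real.sqrt (m + 1 : ℕ) ^ 2 = ((m : ℝ) + 1) := by
      push_cast; exact Real.sq_sqrt (by positivity)
    have h1 : 2 * Real.sqrt m * ((m : ℝ) + 1) ≤ Real.sqrt (m + 1 : ℕ) * (2 * m + 1) := by
      have ha : (0:ℝ) ≤ 2 * Real.sqrt m * ((m : ℝ) + 1) := by positivity
      have hb : (0:ℝ) ≤ Real.sqrt (m + 1 : ℕ) * (2 * m + 1) := by positivity
      have hsq : (2 * Real.sqrt m * ((m : ℝ) + 1)) ^ 2
          ≤ (Real.sqrt (m + 1 : ℕ) * (2 * m + 1)) ^ 2 := by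
        have e1 : (2 * Real.sqrt m * ((m : ℝ) + 1)) ^ 2
            = 4 * Real.sqrt m ^ 2 * ((m : ℝ) + 1) ^ 2 := by ring
        have e2 : (Real.sqrt (m + 1 : ℕ) * (2 * m + 1)) ^ 2
            = Real.sqrt (m + 1 : ℕ) ^ 2 * (2 * (m:ℝ) + 1) ^ 2 := by ring
        rw [e1, e2, hsm, hsm1]; nlinarith
      calc 2 * Real.sqrt m * ((m : ℝ) + 1)
          = Real.sqrt ((2 * Real.sqrt m * ((m : ℝ) + 1)) ^ 2) := (Real.sqrt_sq ha).symm
        _ ≤ Real.sqrt ((Real.sqrt (m + 1 : ℕ) * (2 * m + 1)) ^ 2) := Real.sqrt_le_sqrt hsq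
        _ = _ := Real.sqrt_sq hb
    have hCpos : (0:ℝ) ≤ (Nat.centralBinom m : ℝ) := by positivity
    have hmul : ((m : ℝ) + 1) * (4 : ℝ) ^ (m+1)
        ≤ ((m : ℝ) + 1) * (2 * Real.sqrt (m + 1 : ℕ) * Nat.centralBinom (m+1)) := by
      have hC' : ((m : ℝ) + 1) * (Nat.centralBinom (m+1) : ℝ)
          = 2 * (2 * (m:ℝ) + 1) * Nat.centralBinom m := by push_cast at hC; linarith [hC]
      have e1 : ((m : ℝ) + 1) * (2 * Real.sqrt (m + 1 : ℕ) * Nat.centralBinom (m+1))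
          = 2 * Real.sqrt (m + 1 : ℕ) * (2 * (2 * (m:ℝ) + 1) * Nat.centralBinom m) := by
        have : ((m : ℝ) + 1) * (2 * Real.sqrt (m + 1 : ℕ) * Nat.centralBinom (m+1))
            = 2 * Real.sqrt (m + 1 : ℕ) * (((m : ℝ) + 1) * Nat.centralBinom (m+1)) := by ring
        rw [this, hC']
      rw [e1]
      have h2 : (4:ℝ)^(m+1) * ((m:ℝ)+1) ≤ 4 * ((m:ℝ)+1) * (2 * Real.sqrt m * Nat.centralBinom m) := by
        have := mul_le_mul_of_nonneg_left ih (show (0:ℝ) ≤ 4 * ((m:ℝ)+1) by positivity)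
        calc (4:ℝ)^(m+1) * ((m:ℝ)+1) = 4 * ((m:ℝ)+1) * (4:ℝ)^m := by ring
          _ ≤ _ := this
      have h3 := mul_le_mul_of_nonneg_left h1 (show (0:ℝ) ≤ 4 * (Nat.centralBinom m : ℝ) by positivity)
      nlinarith [h2, h3]
    have hpos : (0:ℝ) < (m : ℝ) + 1 := by positivity
    exact le_of_mul_le_mul_left hmul hpos

/-- Local CLT lower bound used in Lemma 4.2 (one-dimensional case): there exists
`C > 0` with `p_t(0,0) ≥ C·t^{-1/2}` for all `t ≥ 1`. -/
theorem stmt_12 : ∃ C : ℝ, 0 < C ∧ ∀ t : ℝ, 1 ≤ t →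
    C * t ^ (-(1 / 2 : ℝ)) ≤ returnProbZ t := by
  refine ⟨Real.exp (-4) / 8, by positivity, ?_⟩
  intro t ht
  have ht0 : (0:ℝ) < t := lt_of_lt_of_le one_pos ht
  have hsqrt1 : 1 ≤ Real.sqrt t := by
    rw [show (1:ℝ) = Real.sqrt 1 by simp]
    exact Real.sqrt_le_sqrt ht
  have hrp : t ^ (-(1/2 : ℝ)) = (Real.sqrt t)⁻¹ := by
    rw [Real.rpow_neg ht0.le, ← Real.sqrt_eq_rpow]
  -- summability
  have hwsum : Summable (fun n : ℕ => Real.exp (-t) * t ^ n / n.factorial) := by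
    have := (Real.summable_pow_div_factorial t).mul_left (Real.exp (-t))
    simpa [mul_div_assoc] using this
  have hqnn : ∀ n : ℕ, 0 ≤ (if Even n then (n.choose (n / 2) : ℝ) else 0) / 2 ^ n := by
    intro n
    apply div_nonneg _ (by positivity)
    split <;> positivity
  have hq1 : ∀ n : ℕ, (if Even n then (n.choose (n / 2) : ℝ) else 0) / 2 ^ n ≤ 1 := by
    intro n
    rw [div_le_one (by positivity)]
    split
    · have h : ((n.choose (n/2)) : ℝ) ≤ (2:ℝ) ^ n := by
        exact_mod_cast choose_le_two_pow' n (n/2)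
      exact h
    · positivity
  have hgnn : ∀ n : ℕ, 0 ≤ Real.exp (-t) * t ^ n / n.factorial *
      ((if Even n then (n.choose (n / 2) : ℝ) else 0) / 2 ^ n) := by
    intro n
    exact mul_nonneg (by positivity) (hqnn n)
  have hgsum : Summable (fun n : ℕ => Real.exp (-t) * t ^ n / n.factorial *
      ((if Even n then (n.choose (n / 2) : ℝ) else 0) / 2 ^ n)) := by
    apply Summable.of_nonneg_of_le hgnn (fun n => ?_) hwsum
    calc Real.exp (-t) * t ^ n / n.factorial *
        ((if Even n then (n.choose (n / 2) : ℝ) else 0) / 2 ^ n)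
        ≤ Real.exp (-t) * t ^ n / n.factorial * 1 :=
          mul_le_mul_of_nonneg_left (hq1 n) (by positivity)
      _ = Real.exp (-t) * t ^ n / n.factorial := mul_one _
  rcases le_or_gt 4 t with h4 | h4
  · -- main case t ≥ 4
    set M := Nat.floor (2*t) + 1 with hMdef
    have hM : 2*t < (M:ℝ) := by
      rw [hMdef]; push_cast; exact Nat.lt_floor_add_one _
    have hvsum : Summable (fun n : ℕ => Real.exp (-t) * (-t) ^ n / n.factorial) := by
      have := (Real.summable_pow_div_factorial (-t)).mul_left (Real.exp (-t))
      simpa [mul_div_assoc] using this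
    have htw : ∑' n : ℕ, Real.exp (-t) * t ^ n / n.factorial = 1 := by
      calc ∑' n : ℕ, Real.exp (-t) * t ^ n / n.factorial
          = ∑' n : ℕ, Real.exp (-t) * (t ^ n / n.factorial) := by
            simp [mul_div_assoc]
        _ = Real.exp (-t) * ∑' n : ℕ, (t ^ n / (n.factorial:ℝ)) := tsum_mul_left
        _ = Real.exp (-t) * Real.exp t := by rw [tsum_pow_div_factorial']
        _ = 1 := by rw [← Real.exp_add]; simp
    have htv : ∑' n : ℕ, Real.exp (-t) * (-t) ^ n / n.factorial = Real.exp (-(2*t)) := by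
      calc ∑' n : ℕ, Real.exp (-t) * (-t) ^ n / n.factorial
          = ∑' n : ℕ, Real.exp (-t) * ((-t) ^ n / n.factorial) := by
            simp [mul_div_assoc]
        _ = Real.exp (-t) * ∑' n : ℕ, ((-t) ^ n / (n.factorial:ℝ)) := tsum_mul_left
        _ = Real.exp (-t) * Real.exp (-t) := by rw [tsum_pow_div_factorial']
        _ = Real.exp (-(2*t)) := by rw [← Real.exp_add]; ring_nf
    set f : ℕ → ℝ := fun n => if Even n then Real.exp (-t) * t ^ n / n.factorial else 0 with hfdef
    have hfv : ∀ n, f n = (Real.exp (-t) * t ^ n / n.factorial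
        + Real.exp (-t) * (-t) ^ n / n.factorial) / 2 := by
      intro n
      rcases Nat.even_or_odd n with he | ho
      · rw [hfdef]; simp only [he, if_true, Even.neg_pow he]; ring
      · rw [hfdef]; simp only [Nat.not_even_iff_odd.mpr ho, if_false, Odd.neg_pow ho]; ring
    have hfsum : Summable f := by
      rw [funext hfv]
      exact ((hwsum.add hvsum).div_const 2)
    have htf : ∑' n, f n = (1 + Real.exp (-(2*t))) / 2 := by
      rw [funext hfv]
      rw [tsum_div_const, Summable.tsum_add hwsum hvsum, htw, htv]
    have hgsum2 : Summable (fun n : ℕ => (2*t) ^ n / (n.factorial:ℝ)) :=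
      Real.summable_pow_div_factorial (2*t)
    have hshift : ∑' i : ℕ, (2*t) ^ (i+M) / ((i+M).factorial : ℝ) ≤ Real.exp (2*t) := by
      have h := Summable.sum_add_tsum_nat_add (f := fun n : ℕ => (2*t) ^ n / (n.factorial:ℝ)) M hgsum2
      rw [tsum_pow_div_factorial'] at h
      have hpre : 0 ≤ ∑ i ∈ Finset.range M, (2*t) ^ i / ((i).factorial : ℝ) :=
        Finset.sum_nonneg fun i _ => by positivity
      linarith
    have htail : ∑' i : ℕ, f (i + M) ≤ 1/4 := by
      have hfsum' : Summable (fun i : ℕ => f (i + M)) := (summable_nat_add_iff M).mpr hfsum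
      have hgsum' : Summable (fun i : ℕ => Real.exp (-t) / 2^M * ((2*t) ^ (i+M) / ((i+M).factorial:ℝ))) :=
        (((summable_nat_add_iff M).mpr hgsum2).mul_left _)
      have hle : ∀ i : ℕ, f (i + M) ≤ Real.exp (-t) / 2^M * ((2*t) ^ (i+M) / ((i+M).factorial:ℝ)) := by
        intro i
        have h1 : f (i + M) ≤ Real.exp (-t) * t ^ (i+M) / (i+M).factorial := by
          rw [hfdef]; dsimp only; split
          · exact le_rfl
          · positivity
        refine h1.trans ?_
        have ht2 : t ^ (i+M) ≤ (2*t) ^ (i+M) / 2^M := by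
          rw [le_div_iff₀ (by positivity)]
          calc t ^ (i+M) * 2^M ≤ t ^ (i+M) * 2^(i+M) := by
                apply mul_le_mul_of_nonneg_left _ (by positivity)
                exact pow_le_pow_right₀ one_le_two (Nat.le_add_left M i)
            _ = (2*t) ^ (i+M) := by rw [mul_pow]; ring
        calc Real.exp (-t) * t ^ (i+M) / (i+M).factorial
            ≤ Real.exp (-t) * ((2*t) ^ (i+M) / 2^M) / (i+M).factorial := by
              gcongr
          _ = Real.exp (-t) / 2^M * ((2*t) ^ (i+M) / ((i+M).factorial:ℝ)) := by ring
      have h2 : ∑' i : ℕ, f (i + M) ≤ Real.exp (-t) / 2^M * Real.exp (2*t) := by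
        calc ∑' i : ℕ, f (i + M)
            ≤ ∑' i : ℕ, Real.exp (-t) / 2^M * ((2*t) ^ (i+M) / ((i+M).factorial:ℝ)) :=
              Summable.tsum_le_tsum hle hfsum' hgsum'
          _ = Real.exp (-t) / 2^M * ∑' i : ℕ, ((2*t) ^ (i+M) / ((i+M).factorial:ℝ)) := tsum_mul_left
          _ ≤ Real.exp (-t) / 2^M * Real.exp (2*t) := by
              apply mul_le_mul_of_nonneg_left hshift (by positivity)
      refine h2.trans ?_
      have hexp : Real.exp (-t) / 2^M * Real.exp (2*t) = Real.exp t / 2^M := by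
        rw [div_mul_eq_mul_div, mul_comm, ← Real.exp_add]; ring_nf
      rw [hexp, div_le_iff₀ (by positivity)]
      have h2M : (2:ℝ)^M = Real.exp (M * Real.log 2) := by
        rw [Real.exp_nat_mul, Real.exp_log two_pos]
      rw [h2M]
      have hlog : 2 * Real.log 2 + t ≤ M * Real.log 2 := by
        nlinarith [Real.log_two_gt_d9, Real.log_two_lt_d9, hM]
      have h44 : Real.exp (2 * Real.log 2) = 4 := by
        rw [show (2:ℝ) * Real.log 2 = Real.log 2 + Real.log 2 by ring, Real.exp_add,
          Real.exp_log two_pos]; norm_num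
      have hE : Real.exp (2 * Real.log 2 + t) ≤ Real.exp (M * Real.log 2) :=
        Real.exp_le_exp.mpr hlog
      have h4e : 4 * Real.exp t = Real.exp (2 * Real.log 2 + t) := by
        rw [Real.exp_add, h44]
      linarith
    have hpartial : 1/4 ≤ ∑ n ∈ Finset.range M, f n := by
      have h := Summable.sum_add_tsum_nat_add (f := f) M hfsum
      rw [htf] at h
      have : (0:ℝ) ≤ Real.exp (-(2*t)) := (Real.exp_pos _).le
      linarith
    -- per-term lower bound on the filtered set
    set S := (Finset.range M).filter (fun n => Even n) with hSdef
    have hterm : ∀ n ∈ S, (Real.sqrt t)⁻¹ / 2 * (Real.exp (-t) * t ^ n / n.factorial)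
        ≤ Real.exp (-t) * t ^ n / n.factorial *
          ((if Even n then (n.choose (n / 2) : ℝ) else 0) / 2 ^ n) := by
      intro n hn
      rw [hSdef, Finset.mem_filter, Finset.mem_range] at hn
      obtain ⟨hnM, he⟩ := hn
      obtain ⟨m, hm⟩ := he
      have hn2m : n = 2 * m := by omega
      have hnd2 : n / 2 = m := by omega
      have hmt : (m:ℝ) ≤ t := by
        have h1 : (n:ℝ) ≤ 2*t := by
          have : n ≤ Nat.floor (2*t) := by omega
          calc (n:ℝ) ≤ (Nat.floor (2*t) : ℝ) := by exact_mod_cast this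
            _ ≤ 2*t := Nat.floor_le (by positivity)
        rw [hn2m] at h1; push_cast at h1; linarith
      have hq : (Real.sqrt t)⁻¹ / 2 ≤ (if Even n then (n.choose (n / 2) : ℝ) else 0) / 2 ^ n := by
        rw [if_pos ⟨m, hm⟩, hnd2]
        have hch : (n.choose m : ℝ) = (Nat.centralBinom m : ℝ) := by
          rw [hn2m, Nat.centralBinom_eq_two_mul_choose]
        have h2n : (2:ℝ) ^ n = 4 ^ m := by
          rw [hn2m, pow_mul]; norm_num
        rw [hch, h2n]
        rcases Nat.eq_zero_or_pos m with hm0 | hm1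
        · subst hm0
          simp only [Nat.centralBinom_zero, Nat.cast_one, pow_zero, div_one]
          have hi1 : (Real.sqrt t)⁻¹ ≤ 1 := by
            rw [inv_le_one₀ (by positivity)]; exact hsqrt1
          linarith
        · have hb := centralBinom_sqrt_bound m hm1
          have hsmt : Real.sqrt m ≤ Real.sqrt t := Real.sqrt_le_sqrt hmt
          have hCpos : (0:ℝ) < (Nat.centralBinom m : ℝ) := by
            exact_mod_cast Nat.centralBinom_pos m
          have hst : Real.sqrt t * (Real.sqrt t)⁻¹ = 1 := mul_inv_cancel₀ (by positivity)
          have hkey : (4:ℝ)^m ≤ 2 * Real.sqrt t * Nat.centralBinom m := by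
            refine hb.trans ?_
            apply mul_le_mul_of_nonneg_right _ hCpos.le
            apply mul_le_mul_of_nonneg_left hsmt (by norm_num)
          rw [div_le_div_iff₀ (by norm_num) (by positivity)]
          calc (Real.sqrt t)⁻¹ * 4^m
              ≤ (Real.sqrt t)⁻¹ * (2 * Real.sqrt t * Nat.centralBinom m) :=
                mul_le_mul_of_nonneg_left hkey (by positivity)
            _ = 2 * (Nat.centralBinom m : ℝ) * (Real.sqrt t * (Real.sqrt t)⁻¹) := by ring
            _ = 2 * Nat.centralBinom m := by rw [hst]; ring
            _ = (Nat.centralBinom m : ℝ) * 2 := by ring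
      calc (Real.sqrt t)⁻¹ / 2 * (Real.exp (-t) * t ^ n / n.factorial)
          = (Real.exp (-t) * t ^ n / n.factorial) * ((Real.sqrt t)⁻¹ / 2) := by ring
        _ ≤ (Real.exp (-t) * t ^ n / n.factorial) *
            ((if Even n then (n.choose (n / 2) : ℝ) else 0) / 2 ^ n) :=
            mul_le_mul_of_nonneg_left hq (by positivity)
    have hSsum : ∑ n ∈ S, Real.exp (-t) * t ^ n / n.factorial = ∑ n ∈ Finset.range M, f n := by
      rw [hSdef, hfdef, Finset.sum_filter]
    have hmain : (Real.sqrt t)⁻¹ / 8 ≤ returnProbZ t := by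
      have hstep1 : ∑ n ∈ S, Real.exp (-t) * t ^ n / n.factorial *
          ((if Even n then (n.choose (n / 2) : ℝ) else 0) / 2 ^ n) ≤ returnProbZ t :=
        Summable.sum_le_tsum S (fun n _ => hgnn n) hgsum
      have hstep2 : (Real.sqrt t)⁻¹ / 2 * ∑ n ∈ S, Real.exp (-t) * t ^ n / n.factorial
          ≤ ∑ n ∈ S, Real.exp (-t) * t ^ n / n.factorial *
            ((if Even n then (n.choose (n / 2) : ℝ) else 0) / 2 ^ n) := by
        rw [Finset.mul_sum]
        exact Finset.sum_le_sum hterm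
      have hstep3 : (Real.sqrt t)⁻¹ / 8 ≤ (Real.sqrt t)⁻¹ / 2 *
          ∑ n ∈ S, Real.exp (-t) * t ^ n / n.factorial := by
        rw [hSsum]
        have hpos : (0:ℝ) < (Real.sqrt t)⁻¹ := by positivity
        calc (Real.sqrt t)⁻¹ / 8 = (Real.sqrt t)⁻¹ / 2 * (1/4) := by ring
          _ ≤ (Real.sqrt t)⁻¹ / 2 * ∑ n ∈ Finset.range M, f n :=
            mul_le_mul_of_nonneg_left hpartial (by positivity)
      linarith
    calc Real.exp (-4) / 8 * t ^ (-(1/2 : ℝ))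
        = Real.exp (-4) / 8 * (Real.sqrt t)⁻¹ := by rw [hrp]
      _ ≤ 1 / 8 * (Real.sqrt t)⁻¹ := by
        apply mul_le_mul_of_nonneg_right _ (by positivity)
        have : Real.exp (-4:ℝ) ≤ 1 := Real.exp_le_one_iff.mpr (by norm_num)
        linarith
      _ = (Real.sqrt t)⁻¹ / 8 := by ring
      _ ≤ returnProbZ t := hmain
  · -- small case 1 ≤ t < 4
    have h0 : Real.exp (-t) ≤ returnProbZ t := by
      have h := Summable.le_tsum hgsum 0 (fun j _ => hgnn j)
      simpa [returnProbZ] using h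
    have hinv : (Real.sqrt t)⁻¹ ≤ 1 := by
      rw [inv_le_one₀ (by positivity)]; exact hsqrt1
    calc Real.exp (-4) / 8 * t ^ (-(1/2 : ℝ))
        = Real.exp (-4) / 8 * (Real.sqrt t)⁻¹ := by rw [hrp]
      _ ≤ Real.exp (-4) / 8 * 1 :=
        mul_le_mul_of_nonneg_left hinv (by positivity)
      _ ≤ Real.exp (-t) := by
        have : Real.exp (-4:ℝ) ≤ Real.exp (-t) := Real.exp_le_exp.mpr (by linarith)
        have hp := (Real.exp_pos (-4:ℝ)).le
        linarith
      _ ≤ returnProbZ t := h0
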